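/- arXiv:2310.06528 — 4 statements merged into one kernel-verified Lean document; each statement's English description precedes it below -/
import Mathlib

section
/- Let (X,d) be a metric space, f : X → ℝ with zer f nonempty, z ∈ zer f, b > 0. Let I : ℕ × X → X be an iteration scheme and τ : ℕ² → ℕ a modulus of coincidence for I. Assume that for every x₀ ∈ B̄(z,b), the sequence defined by x_{n+1} := I(n, x_n) converges to a point ℓ(x₀) ∈ zer f with common rate of convergence Ψ : ℕ → ℕ, i.e. d(x₀,z) ≤ b implies d(x_n, ℓ(x₀)) ≤ 1/(k+1) for all n ≥ Ψ(k). Then μ(k) := τ(2k+1, Ψ(2k+1)) is a modulus of regularity for f w.r.t. zer f and B̄(z,b). -/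
/-- a uniform rate of convergence yields a modulus of regularity. -/
theorem stmt5 {X : Type*} [MetricSpace X] (f : X → ℝ)
    (z : X) (hz : f z = 0) (b : ℝ) (hb : 0 < b)
    (I : ℕ → X → X) (seq : X → ℕ → X)
    (hseq0 : ∀ x0 : X, seq x0 0 = x0)
    (hseqS : ∀ x0 : X, ∀ n : ℕ, seq x0 (n + 1) = I n (seq x0 n))
    (τ : ℕ → ℕ → ℕ)
    (hτ : ∀ n k : ℕ, ∀ x0 : X,
      |f x0| < 1 / (τ k n + 1) → dist (seq x0 n) x0 < 1 / (k + 1))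
    (ℓ : X → X)
    (hℓ : ∀ x0 ∈ Metric.closedBall z b, f (ℓ x0) = 0)
    (Ψ : ℕ → ℕ)
    (hΨ : ∀ x0 ∈ Metric.closedBall z b, ∀ k : ℕ, ∀ n : ℕ, Ψ k ≤ n →
      dist (seq x0 n) (ℓ x0) ≤ 1 / (k + 1)) :
    ∀ k : ℕ, ∀ x0 ∈ Metric.closedBall z b,
      |f x0| < 1 / (τ (2 * k + 1) (Ψ (2 * k + 1)) + 1) →
      Metric.infDist x0 {w : X | f w = 0} < 1 / (k + 1) := by
  intro k x0 hx0 hf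
  have h1 := hτ (Ψ (2 * k + 1)) (2 * k + 1) x0 hf
  have h2 := hΨ x0 hx0 (2 * k + 1) (Ψ (2 * k + 1)) le_rfl
  have hd : dist x0 (ℓ x0) < 1 / (k + 1) := by
    have t := dist_triangle x0 (seq x0 (Ψ (2 * k + 1))) (ℓ x0)
    rw [dist_comm x0 (seq x0 (Ψ (2 * k + 1)))] at t
    have hk : (1 : ℝ) / (2 * k + 1 + 1) + 1 / (2 * k + 1 + 1) = 1 / (k + 1) := by
      have : (k : ℝ) + 1 > 0 := by positivity
      field_simp
      ring
    push_cast at h1 h2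
    linarith
  have hmem : ℓ x0 ∈ {w : X | f w = 0} := hℓ x0 hx0
  calc Metric.infDist x0 {w : X | f w = 0} ≤ dist x0 (ℓ x0) := Metric.infDist_le_dist_of_mem hmem
    _ < 1 / (k + 1) := hd
end

section
/- Let X be a normed linear space, T : X → X nonexpansive, and (α_n), (β_n) ⊆ [0,1]. For the Ishikawa iteration x_{n+1} := α_n x_n + (1−α_n) T(β_n x_n + (1−β_n) T(x_n)), the function τ(k,n) := 2n(k+1) is a modulus of coincidence: for all n, k ∈ ℕ and all x₀ ∈ X, if ‖x₀ − T x₀‖ < 1/(τ(k,n)+1) then ‖x_n − x₀‖ < 1/(k+1). -/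
lemma conv_norm_le {X : Type*} [NormedAddCommGroup X] [NormedSpace ℝ X]
    (s : ℝ) (hs0 : 0 ≤ s) (hs1 : s ≤ 1) (u v p : X) :
    ‖s • u + (1 - s) • v - p‖ ≤ s * ‖u - p‖ + (1 - s) * ‖v - p‖ := by
  have h : s • u + (1 - s) • v - p = s • (u - p) + (1 - s) • (v - p) := by
    module
  rw [h]
  calc ‖s • (u - p) + (1 - s) • (v - p)‖
      ≤ ‖s • (u - p)‖ + ‖(1 - s) • (v - p)‖ := norm_add_le _ _
    _ = s * ‖u - p‖ + (1 - s) * ‖v - p‖ := by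
        rw [norm_smul, norm_smul, Real.norm_eq_abs, Real.norm_eq_abs,
          abs_of_nonneg hs0, abs_of_nonneg (by linarith)]

/-- modulus of coincidence for the Ishikawa iteration. -/
theorem stmt7 {X : Type*} [NormedAddCommGroup X] [NormedSpace ℝ X]
    (T : X → X) (hT : ∀ x y : X, ‖T x - T y‖ ≤ ‖x - y‖)
    (α β : ℕ → ℝ) (hα : ∀ n, α n ∈ Set.Icc (0 : ℝ) 1)
    (hβ : ∀ n, β n ∈ Set.Icc (0 : ℝ) 1)
    (x0 : X) (x : ℕ → X) (hx0 : x 0 = x0)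
    (hrec : ∀ n : ℕ,
      x (n + 1) = α n • x n + (1 - α n) • T (β n • x n + (1 - β n) • T (x n))) :
    ∀ n k : ℕ, ‖x0 - T x0‖ < 1 / (2 * (n : ℝ) * (k + 1) + 1) →
      ‖x n - x0‖ < 1 / (k + 1) := by
  set d : ℝ := ‖x0 - T x0‖ with hd
  have hd0 : 0 ≤ d := norm_nonneg _
  have hTd : ∀ z : X, ‖T z - x0‖ ≤ ‖z - x0‖ + d := by
    intro z
    calc ‖T z - x0‖ ≤ ‖T z - T x0‖ + ‖T x0 - x0‖ := norm_sub_le_norm_sub_add_norm_sub _ _ _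
      _ ≤ ‖z - x0‖ + d := by
          have h1 := hT z x0
          have h2 : ‖T x0 - x0‖ = d := by rw [hd, norm_sub_rev]
          linarith
  have key : ∀ n, ‖x (n + 1) - x0‖ ≤ ‖x n - x0‖ + 2 * d := by
    intro n
    obtain ⟨ha0, ha1⟩ := hα n
    obtain ⟨hb0, hb1⟩ := hβ n
    set y : X := β n • x n + (1 - β n) • T (x n) with hy
    have h1 : ‖x (n + 1) - x0‖ ≤ α n * ‖x n - x0‖ + (1 - α n) * ‖T y - x0‖ := by
      rw [hrec n]; exact conv_norm_le (α n) ha0 ha1 _ _ _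
    have h2 : ‖T y - x0‖ ≤ ‖y - x0‖ + d := hTd y
    have h3 : ‖y - x0‖ ≤ β n * ‖x n - x0‖ + (1 - β n) * ‖T (x n) - x0‖ :=
      conv_norm_le (β n) hb0 hb1 _ _ _
    have h4 : ‖T (x n) - x0‖ ≤ ‖x n - x0‖ + d := hTd (x n)
    have hn0 : (0:ℝ) ≤ ‖x n - x0‖ := norm_nonneg _
    have h5 : ‖y - x0‖ ≤ ‖x n - x0‖ + d := by
      nlinarith [mul_le_mul_of_nonneg_left h4 (sub_nonneg.mpr hb1),
        mul_nonneg hb0 hd0]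
    have h6 : ‖T y - x0‖ ≤ ‖x n - x0‖ + 2 * d := by linarith
    nlinarith [mul_le_mul_of_nonneg_left h6 (sub_nonneg.mpr ha1),
      mul_nonneg ha0 hd0]
  have bound : ∀ n : ℕ, ‖x n - x0‖ ≤ 2 * n * d := by
    intro n
    induction n with
    | zero => simp [hx0]
    | succ m ih =>
        have := key m
        push_cast
        push_cast at ih
        linarith
  intro n k hlt
  have hK : (0:ℝ) < (k:ℝ) + 1 := by positivity
  have hN : (0:ℝ) ≤ (n:ℝ) := Nat.cast_nonneg n
  have hC : (0:ℝ) < 2 * (n:ℝ) * ((k:ℝ) + 1) + 1 := by positivity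
  have hd1 : d * (2 * (n:ℝ) * ((k:ℝ) + 1) + 1) < 1 := (lt_div_iff₀ hC).mp hlt
  rw [lt_div_iff₀ hK]
  have hb := bound n
  nlinarith [mul_nonneg (mul_nonneg (by norm_num : (0:ℝ) ≤ 2) hN) hd0]
end

section
/- Let X be a normed space, T : X → X nonexpansive with at least one fixed point, (α_n) ⊆ [0,1], and consider the Halpern iteration x_{n+1} := α_n x₀ + (1−α_n) T(x_n) anchored at the initial point u = x₀. Then the iteration satисfies property (++): if x₀ is a fixed point of T, then x_n = x₀ for all n. Moreover τ(k,n) := n(k+1) is a modulus of coincidence for f(x) := ‖x − T x‖. -/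
/-- the Halpern iteration anchored at its starting point satisfies
(++) and admits the modulus of coincidence τ(k,n) = n(k+1). -/
theorem stmt8 {X : Type*} [NormedAddCommGroup X] [NormedSpace ℝ X]
    (T : X → X) (hT : ∀ x y : X, ‖T x - T y‖ ≤ ‖x - y‖)
    (hfix : ∃ p : X, T p = p)
    (α : ℕ → ℝ) (hα : ∀ n, α n ∈ Set.Icc (0 : ℝ) 1)
    (x0 : X) (x : ℕ → X) (hx0 : x 0 = x0)
    (hrec : ∀ n : ℕ, x (n + 1) = α n • x0 + (1 - α n) • T (x n)) :
    (T x0 = x0 → ∀ n : ℕ, x n = x0) ∧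
    (∀ n k : ℕ, ‖x0 - T x0‖ < 1 / ((n : ℝ) * (k + 1) + 1) →
      ‖x n - x0‖ < 1 / (k + 1)) := by
  have key : ∀ n : ℕ, ‖x n - x0‖ ≤ (n : ℝ) * ‖x0 - T x0‖ := by
    intro n
    induction n with
    | zero => simp [hx0]
    | succ n ih =>
      have h1 : x (n + 1) - x0 = (1 - α n) • (T (x n) - x0) := by
        rw [hrec n]
        have : (α n) • x0 + (1 - α n) • x0 = x0 := by
          rw [← add_smul]; ring_nf; simp
        calc α n • x0 + (1 - α n) • T (x n) - x0
            = (1 - α n) • T (x n) - (1 - α n) • x0 := by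
              nth_rewrite 2 [← this]; abel
          _ = (1 - α n) • (T (x n) - x0) := by rw [smul_sub]
      have hα0 := (hα n).1
      have hα1 := (hα n).2
      have h2 : ‖T (x n) - x0‖ ≤ ‖x n - x0‖ + ‖x0 - T x0‖ := by
        calc ‖T (x n) - x0‖ ≤ ‖T (x n) - T x0‖ + ‖T x0 - x0‖ := norm_sub_le_norm_sub_add_norm_sub _ _ _
          _ ≤ ‖x n - x0‖ + ‖x0 - T x0‖ := by
              have := hT (x n) x0
              rw [norm_sub_rev (T x0)]
              linarith
      have h3 : ‖x (n + 1) - x0‖ ≤ ‖x n - x0‖ + ‖x0 - T x0‖ := by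
        rw [h1, norm_smul]
        have : |1 - α n| ≤ 1 := by rw [abs_le]; constructor <;> linarith
        calc |1 - α n| * ‖T (x n) - x0‖ ≤ 1 * ‖T (x n) - x0‖ :=
              mul_le_mul_of_nonneg_right this (norm_nonneg _)
          _ = ‖T (x n) - x0‖ := one_mul _
          _ ≤ ‖x n - x0‖ + ‖x0 - T x0‖ := h2
      push_cast
      linarith
  constructor
  · intro hfx n
    induction n with
    | zero => exact hx0
    | succ n ih =>
      rw [hrec n, ih, hfx, ← add_smul]
      ring_nf; simp
  · intro n k h
    have hk : (0 : ℝ) < (k : ℝ) + 1 := by positivity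
    rcases Nat.eq_zero_or_pos n with hn | hn
    · subst hn; rw [hx0]; simpa using (by positivity : (0:ℝ) < 1 / ((k:ℝ)+1))
    · have hn' : (1 : ℝ) ≤ (n : ℝ) := by exact_mod_cast hn
      have hd : (0 : ℝ) < (n : ℝ) * (k + 1) + 1 := by positivity
      have := key n
      have h4 : (n : ℝ) * ‖x0 - T x0‖ < (n : ℝ) / ((n : ℝ) * (k + 1) + 1) := by
        have := mul_lt_mul_of_pos_left h (lt_of_lt_of_le one_pos hn')
        calc (n : ℝ) * ‖x0 - T x0‖ < (n : ℝ) * (1 / ((n : ℝ) * (k + 1) + 1)) := this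
          _ = (n : ℝ) / ((n : ℝ) * (k + 1) + 1) := by ring
      have h5 : (n : ℝ) / ((n : ℝ) * (k + 1) + 1) < 1 / ((k : ℝ) + 1) := by
        rw [div_lt_div_iff₀ hd hk]
        nlinarith
      linarith
end

section
/- In the setting of the metastability theorem, with n_i := Ψ₀(i, k, g, φ, χ, ρ, β_H) defined via φ(k) := min{m : x_m ∈ AF_k ∧ A(m,k)}: for all j ≥ 1 and all 0 ≤ i < j, the point x_{n_j} is a χ_g(n_i, 2β_H(2k+1)+1)-approximate F-point (i.e. x_{n_j} ∈ AF_{χ_g(n_i, 2β_H(2k+1)+1)}). -/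
/-- χ^M_g(n,k) := max of χ_g(i,k) = χ(i, g(i), k) over i ≤ n. -/
def chiM (χ : ℕ → ℕ → ℕ → ℕ) (g : ℕ → ℕ) (n k : ℕ) : ℕ :=
  Finset.sup (Finset.range (n + 1)) (fun i => χ i (g i) k)

/-- The iteration Ψ₀ from the metastability theorem (with φ in place of Φ). -/
def Psi0 (φ : ℕ → ℕ) (χ : ℕ → ℕ → ℕ → ℕ) (ρ βH : ℕ → ℕ) (k : ℕ)
    (g : ℕ → ℕ) : ℕ → ℕ
  | 0 => φ (ρ (2 * βH (2 * k + 1) + 1))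
  | n + 1 => φ (max (chiM χ g (Psi0 φ χ ρ βH k g n) (2 * βH (2 * k + 1) + 1))
      (ρ (2 * βH (2 * k + 1) + 1)))

/-- Claim 1 of the metastability theorem: for j ≥ 1 and i < j,
x_{n_j} is a χ_g(n_i, 2β_H(2k+1)+1)-approximate F-point. -/
theorem stmt15 {X : Type*} [MetricSpace X]
    (AF : ℕ → Set X) (hAF : ∀ k l : ℕ, k ≤ l → AF l ⊆ AF k)
    (A : ℕ → ℕ → Prop) (hA : ∀ n k₁ k₂ : ℕ, k₁ ≤ k₂ → A n k₂ → A n k₁)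
    (x : ℕ → X) (χ : ℕ → ℕ → ℕ → ℕ) (ρ βH : ℕ → ℕ) (k : ℕ) (g : ℕ → ℕ)
    (φ : ℕ → ℕ)
    (hφ : ∀ m : ℕ, x (φ m) ∈ AF m ∧ A (φ m) m ∧
      ∀ n : ℕ, x n ∈ AF m ∧ A n m → φ m ≤ n) :
    ∀ j : ℕ, 1 ≤ j → ∀ i : ℕ, i < j →
      x (Psi0 φ χ ρ βH k g j) ∈
        AF (χ (Psi0 φ χ ρ βH k g i) (g (Psi0 φ χ ρ βH k g i))
          (2 * βH (2 * k + 1) + 1)) := by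
  set K := 2 * βH (2 * k + 1) + 1 with hK
  -- φ is monotone
  have hφmono : Monotone φ := by
    intro a b hab
    obtain ⟨h1, h2, _⟩ := hφ b
    exact (hφ a).2.2 _ ⟨hAF a b hab h1, hA _ a b hab h2⟩
  -- Psi0 is monotone
  have hstep : ∀ n, Psi0 φ χ ρ βH k g n ≤ Psi0 φ χ ρ βH k g (n + 1) := by
    intro n
    induction n with
    | zero =>
      show φ _ ≤ φ _
      exact hφmono (le_max_right _ _)
    | succ m ih =>
      show φ _ ≤ φ _
      apply hφmono
      apply max_le_max_right
      apply Finset.sup_mono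
      exact Finset.range_subset_range.2 (by omega)
  have hmono : Monotone (Psi0 φ χ ρ βH k g) :=
    monotone_nat_of_le_succ hstep
  intro j hj i hij
  obtain ⟨m, rfl⟩ : ∃ m, j = m + 1 := ⟨j - 1, by omega⟩
  have him : Psi0 φ χ ρ βH k g i ≤ Psi0 φ χ ρ βH k g m := hmono (by omega)
  have hle : χ (Psi0 φ χ ρ βH k g i) (g (Psi0 φ χ ρ βH k g i)) K ≤
      max (chiM χ g (Psi0 φ χ ρ βH k g m) K) (ρ K) := by
    refine le_trans ?_ (le_max_left _ _)
    exact Finset.le_sup (f := fun n => χ n (g n) K)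
      (Finset.mem_range.2 (Nat.lt_succ_of_le him))
  exact hAF _ _ hle (hφ _).1
end
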